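/- The misclassification error of the optimal classifier based on the whole observed curve fragments equals that of the optimal classifier based on the filtered (score) curves: ℙ{Γ₀^B(χ^(δ)) ≠ Y} = ℙ{Γ^B(X^(δ)) ≠ Y}. -/
import Mathlib


open MeasureTheory ProbabilityTheory Filter RealInnerProductSpace

noncomputable section

/-- The sequence space `ℓ₂` of square-summable real sequences. -/
abbrev ell2 : Type := lp (fun _ : ℕ => ℝ) 2

noncomputable instance : MeasurableSpace ell2 := borel _
instance : BorelSpace ell2 := ⟨rfl⟩

noncomputable instance (μ : Measure ℝ) : MeasurableSpace (Lp ℝ 2 μ) := borel _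
instance (μ : Measure ℝ) : BorelSpace (Lp ℝ 2 μ) := ⟨rfl⟩

/-- The misclassification error of the optimal classifier based on the
observed curve fragments equals that of the optimal classifier based on the filtered
(score) curves: `ℙ{Γ₀^B(χ^(δ)) ≠ Y} = ℙ{Γ^B(X^(δ)) ≠ Y}`, where for each `k`,
`X^(k) = t_k(χ|_{s_k}) ∈ ℓ₂` is the sequence of coefficients of `χ|_{s_k}` in a complete
orthonormal (Hilbert) basis `ψ_1^{(k)}, ψ_2^{(k)}, …` of `L²(s_k)`. -/
theorem functional_error_eq_filtered_error
    {Ω : Type} [MeasurableSpace Ω] (P : Measure Ω) [IsProbabilityMeasure P]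
    (M : ℕ) (hM : 1 ≤ M)
    (Y : Ω → ℝ) (hYmeas : Measurable Y) (hY01 : ∀ ω, Y ω = 0 ∨ Y ω = 1)
    (δ : Ω → Fin M) (hδ : Measurable δ)
    (a b : ℝ) (hab : a ≤ b) (𝓘 : Set ℝ) (h𝓘 : 𝓘 = Set.Icc a b)
    (s : Fin M → Set ℝ) (hsmeas : ∀ k, MeasurableSet (s k))
    (hs𝓘 : ∀ k, s k ⊆ 𝓘) (hs0 : ∀ h0 : 0 < M, s ⟨0, h0⟩ = 𝓘)
    (χ : Ω → Lp ℝ 2 (volume.restrict 𝓘)) (hχ : Measurable χ)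
    (χres : (k : Fin M) → Ω → Lp ℝ 2 (volume.restrict (s k)))
    (hχres : ∀ k, Measurable (χres k))
    (hχresAE : ∀ k ω, (χres k ω : ℝ → ℝ) =ᵐ[volume.restrict (s k)] (χ ω : ℝ → ℝ))
    -- φ0 k is a version of the conditional expectation 𝔼[(2Y−1)·1{δ=k} | σ(χ|_{s_k})]
    (φ0 : Fin M → Ω → ℝ)
    (hφ0 : ∀ k, φ0 k =
      P[(fun ω => (2 * Y ω - 1) * (if δ ω = k then (1:ℝ) else 0)) |
        MeasurableSpace.comap (χres k) inferInstance])
    -- a complete orthonormal basis of each L²(s_k), and the associated score (filter) maps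
    (ψ : (k : Fin M) → HilbertBasis ℕ ℝ (Lp ℝ 2 (volume.restrict (s k))))
    (X : Fin M → Ω → ell2)
    (hXdef : ∀ k ω, X k ω = (ψ k).repr (χres k ω))
    (hXcoord : ∀ k ω (j : ℕ), X k ω j = ⟪ψ k j, χres k ω⟫)
    -- φ k is a version of the conditional expectation 𝔼[(2Y−1)·1{δ=k} | σ(X^(k))]
    (φ : Fin M → Ω → ℝ)
    (hφ : ∀ k, φ k =
      P[(fun ω => (2 * Y ω - 1) * (if δ ω = k then (1:ℝ) else 0)) |
        MeasurableSpace.comap (X k) inferInstance]) :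
    P {ω | (∑ k, (if δ ω = k then (1:ℝ) else 0) * (if 0 < φ0 k ω then (1:ℝ) else 0)) ≠ Y ω}
      = P {ω | (∑ k, (if δ ω = k then (1:ℝ) else 0) * (if 0 < φ k ω then (1:ℝ) else 0)) ≠ Y ω} := by
  have key : ∀ k, φ0 k = φ k := by
    intro k
    rw [hφ0 k, hφ k]
    have hXeq : X k = (((ψ k).repr : Lp ℝ 2 (volume.restrict (s k)) → ell2)) ∘ (χres k) :=
      funext fun ω => hXdef k ω
    set e : Lp ℝ 2 (volume.restrict (s k)) ≃ₜ ell2 :=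
      ((ψ k).repr : Lp ℝ 2 (volume.restrict (s k)) ≃ₗᵢ[ℝ] ell2).toHomeomorph with he_def
    have hcoe : (((ψ k).repr : Lp ℝ 2 (volume.restrict (s k)) → ell2))
        = (e : Lp ℝ 2 (volume.restrict (s k)) → ell2) := rfl
    have he : Measurable (e : Lp ℝ 2 (volume.restrict (s k)) → ell2) := e.continuous.measurable
    have hes : Measurable (e.symm : ell2 → Lp ℝ 2 (volume.restrict (s k))) :=
      e.symm.continuous.measurable
    have hcom : MeasurableSpace.comap (e : Lp ℝ 2 (volume.restrict (s k)) → ell2)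
        (inferInstance : MeasurableSpace ell2)
        = (inferInstance : MeasurableSpace (Lp ℝ 2 (volume.restrict (s k)))) := by
      refine le_antisymm (Measurable.comap_le he) fun t ht => ⟨e.symm ⁻¹' t, hes ht, ?_⟩
      ext x
      simp
    have hσ : MeasurableSpace.comap (X k) inferInstance
        = MeasurableSpace.comap (χres k) inferInstance := by
      rw [hXeq, hcoe, ← MeasurableSpace.comap_comp, hcom]
    rw [hσ]
  have hset : {ω | (∑ k, (if δ ω = k then (1:ℝ) else 0) * (if 0 < φ0 k ω then (1:ℝ) else 0)) ≠ Y ω}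
      = {ω | (∑ k, (if δ ω = k then (1:ℝ) else 0) * (if 0 < φ k ω then (1:ℝ) else 0)) ≠ Y ω} := by
    ext ω
    simp only [Set.mem_setOf_eq, key]
  rw [hset]
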